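/- If E is an extension of (W,D) with generating default set GD(W,D,E), then E = Th(W ∪ Conseq(GD(W,D,E))), i.e., E is the deductive closure of W together with the consequents of its generating defaults. -/

import Mathlib

/-- Propositional formulas over natural-number atoms. -/
inductive PForm where
  | atom : ℕ → PForm
  | neg : PForm → PForm
  | conj : PForm → PForm → PForm
  | disj : PForm → PForm → PForm
deriving DecidableEq

/-- Satisfaction of a formula under a valuation. -/
def PForm.sat (v : ℕ → Prop) : PForm → Prop
  | .atom n => v n
  | .neg f => ¬ f.sat v
  | .conj f g => f.sat v ∧ g.sat v
  | .disj f g => f.sat v ∨ g.sat v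

/-- Propositional deductive closure (semantic consequence). -/
def Th (S : Set PForm) : Set PForm :=
  {φ | ∀ v : ℕ → Prop, (∀ ψ ∈ S, ψ.sat v) → φ.sat v}

/-- Propositional entailment `S ⊢ φ`. -/
def Entails (S : Set PForm) (φ : PForm) : Prop := φ ∈ Th S

/-- A default rule (α : β₁,…,βₙ / γ). -/
structure DRule where
  prereq : PForm
  justifs : List PForm
  conseq : PForm

/-- Consequents of a set of defaults. -/
def Conseq (Δ : Set DRule) : Set PForm := DRule.conseq '' Δ

/-- The defining properties of Γ(S): `T` contains `W`, is deductively closed,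
and is closed under defaults applicable w.r.t. `S`. -/
def GammaClosed (W : Set PForm) (D : Set DRule) (S T : Set PForm) : Prop :=
  W ⊆ T ∧ Th T = T ∧
  ∀ δ ∈ D, δ.prereq ∈ T → (∀ β ∈ δ.justifs, PForm.neg β ∉ S) → δ.conseq ∈ T

/-- Γ(S): the smallest set satisfying `GammaClosed`. -/
def Gamma (W : Set PForm) (D : Set DRule) (S : Set PForm) : Set PForm :=
  ⋂₀ {T | GammaClosed W D S T}

/-- Reiter extension: fixed point of Γ. -/
def IsExtension (W : Set PForm) (D : Set DRule) (E : Set PForm) : Prop :=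
  Gamma W D E = E

/-- Generating default set of `E`. -/
def GD (W : Set PForm) (D : Set DRule) (E : Set PForm) : Set DRule :=
  {δ ∈ D | δ.prereq ∈ E ∧ ∀ β ∈ δ.justifs, PForm.neg β ∉ E}

/-- Groundedness of a (finite) set of defaults. -/
def Grounded (W : Set PForm) (Δ : Set DRule) : Prop :=
  ∃ L : List DRule, L.Nodup ∧ {δ | δ ∈ L} = Δ ∧
    ∀ i (h : i < L.length),
      Entails (W ∪ Conseq {δ | δ ∈ L.take i}) (L.get ⟨i, h⟩).prereq

/-!
Since `E = Γ(E)` satisfies the closure conditions of `Γ` relative to `E`, it contains `W` and the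
consequents of its generating defaults, hence their deductive closure. Conversely, that closure
itself satisfies the closure conditions: a default applicable to it has its prerequisite in the
closure, hence in `E`, so it is generating and its consequent is already there. Minimality of
`Γ(E) = E` gives the reverse inclusion.
-/

lemma Th_mono {S T : Set PForm} (h : S ⊆ T) : Th S ⊆ Th T :=
  fun _ hφ v hv => hφ v fun ψ hψ => hv ψ (h hψ)

lemma subset_Th (S : Set PForm) : S ⊆ Th S :=
  fun ψ hψ _ hv => hv ψ hψ

lemma Th_Th (S : Set PForm) : Th (Th S) = Th S :=
  Set.Subset.antisymm (fun _ hφ v hv => hφ v fun _ hψ => hψ v hv) (subset_Th _)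

lemma Th_subset_of_subset {S T : Set PForm} (hST : S ⊆ T) (hT : Th T = T) : Th S ⊆ T :=
  hT ▸ Th_mono hST

section Gamma

variable {W : Set PForm} {D : Set DRule} {S T : Set PForm}

lemma gammaClosed_gamma : GammaClosed W D S (Gamma W D S) := by
  refine ⟨fun φ hφ T hT => hT.1 hφ, Set.Subset.antisymm ?_ (subset_Th _),
    fun δ hδ hpre hjust T hT => hT.2.2 δ hδ (hpre T hT) hjust⟩
  intro φ hφ T hT
  exact Th_subset_of_subset (fun ψ (hψ : ψ ∈ Gamma W D S) => hψ T hT) hT.2.1 hφ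

lemma gamma_subset_of_gammaClosed (hT : GammaClosed W D S T) : Gamma W D S ⊆ T :=
  Set.sInter_subset_of_mem hT

lemma IsExtension.gammaClosed {E : Set PForm} (hE : IsExtension W D E) :
    GammaClosed W D E E :=
  (congrArg (GammaClosed W D E) hE).mp gammaClosed_gamma

end Gamma

section GeneratingDefaults

variable {W : Set PForm} {D : Set DRule} {E : Set PForm}

lemma Th_union_conseq_GD_subset (hE : GammaClosed W D E E) :
    Th (W ∪ Conseq (GD W D E)) ⊆ E := by
  refine Th_subset_of_subset (Set.union_subset hE.1 ?_) hE.2.1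
  rintro _ ⟨δ, ⟨hδD, hpre, hjust⟩, rfl⟩
  exact hE.2.2 δ hδD hpre hjust

lemma gammaClosed_Th_union_conseq_GD (hE : GammaClosed W D E E) :
    GammaClosed W D E (Th (W ∪ Conseq (GD W D E))) := by
  refine ⟨Set.subset_union_left.trans (subset_Th _), Th_Th _, fun δ hδD hpre hjust => ?_⟩
  have hδ : δ ∈ GD W D E := ⟨hδD, Th_union_conseq_GD_subset hE hpre, hjust⟩
  exact subset_Th _ (Or.inr ⟨δ, hδ, rfl⟩)

end GeneratingDefaults

theorem extension_eq_closure_of_generating_defaults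
    (W : Set PForm) (D : Set DRule) (E : Set PForm)
    (hE : IsExtension W D E) :
    E = Th (W ∪ Conseq (GD W D E)) := by
  have hEE : GammaClosed W D E E := hE.gammaClosed
  refine Set.Subset.antisymm ?_ (Th_union_conseq_GD_subset hEE)
  calc E = Gamma W D E := hE.symm
    _ ⊆ Th (W ∪ Conseq (GD W D E)) :=
      gamma_subset_of_gammaClosed (gammaClosed_Th_union_conseq_GD hEE)
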